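/- Let p be an odd prime and λ ∈ F_p with λ ∉ {0,1}. Then ₂F₁(phi, phi; ε | λ) = phi(-1) · ₂F₁(phi, phi; ε | 1-λ), where ₂F₁ is Greene's hypergeometric series and phi the quadratic character. -/

import Mathlib

/-!
Expanding both binomial coefficients as Jacobi sums and summing over `χ` by orthogonality
collapses `₂F₁(φ, φ; ε | λ)` to the cubic character sum `p⁻¹ ∑ₓ φ(x(1 - x)(1 - (1 - λ)x))`.
The substitution `x ↦ x⁻¹` turns `x(1 - x)(1 - μx)` into `x(x - 1)(x - μ)` up to a square, and
`x ↦ 1 - x` turns the latter into `-x(x - 1)(x - (1 - μ))`, which exchanges `λ` and `1 - λ` at the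
cost of the factor `φ(-1)`.
-/

open Finset

noncomputable def phiChar (p : ℕ) [Fact p.Prime] : MulChar (ZMod p) ℂ :=
  (quadraticChar (ZMod p)).ringHomComp (Int.castRingHom ℂ)

noncomputable def gbinom {p : ℕ} [Fact p.Prime] (A B : MulChar (ZMod p) ℂ) : ℂ :=
  (B (-1) / p) * jacobiSum A B⁻¹

noncomputable def twoF1 {p : ℕ} [Fact p.Prime] (A B C : MulChar (ZMod p) ℂ) (x : ZMod p) : ℂ :=
  ((p : ℂ) / (p - 1)) * ∑ χ : MulChar (ZMod p) ℂ, gbinom (A * χ) χ * gbinom (B * χ) (C * χ) * χ x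

lemma mul_mul_inv_one_sub_eq_one_iff {F : Type*} [Field F] {c y : F} :
    c * (y * (1 - y)⁻¹) = 1 ↔ c ≠ 0 ∧ (c + 1) * y = 1 := by
  rcases eq_or_ne y 1 with rfl | hy
  · simp
  have hy' : 1 - y ≠ 0 := sub_ne_zero.mpr hy.symm
  constructor
  · intro h
    refine ⟨left_ne_zero_of_mul_eq_one h, ?_⟩
    field_simp at h
    linear_combination h
  · rintro ⟨hc, h⟩
    field_simp
    linear_combination h

namespace MulChar

variable {F R : Type*} [Field F] [CommRing R]

lemma sum_ite_mul_eq_one [Fintype F] [DecidableEq F] (ψ : MulChar F R) (a : F) :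
    ∑ y : F, (if a * y = 1 then ψ y else 0) = ψ a⁻¹ := by
  rcases eq_or_ne a 0 with rfl | ha
  · simp
  · simp [mul_eq_one_iff_inv_eq₀ ha]

lemma jacobiSum_mul_inv_right [Fintype F] [DecidableEq F] (A χ : MulChar F R) :
    jacobiSum (A * χ) χ⁻¹ = ∑ x : F, A x * χ (x * (1 - x)⁻¹) := by
  simp only [jacobiSum, mul_apply, inv_apply', map_mul]
  exact sum_congr rfl fun _ _ => by ring

variable {ψ : MulChar F R}

lemma IsQuadratic.apply_inv (hψ : ψ.IsQuadratic) (a : F) : ψ a⁻¹ = ψ a := by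
  rw [← inv_apply', hψ.inv]

lemma IsQuadratic.apply_mul_self_mul (hψ : ψ.IsQuadratic) {a : F} (ha : a ≠ 0) (b : F) :
    ψ (a * a * b) = ψ b := by
  have hsq : ψ a * ψ a = 1 := by
    rw [← sq, ← pow_apply' ψ two_ne_zero, hψ.sq_eq_one, one_apply (isUnit_iff_ne_zero.mpr ha)]
  rw [map_mul, map_mul, hsq, one_mul]

lemma apply_neg (ψ : MulChar F R) (a : F) : ψ (-a) = ψ (-1) * ψ a := by
  rw [← map_mul, neg_one_mul]

variable [Fintype F]

lemma IsQuadratic.sum_legendre_eq (hψ : ψ.IsQuadratic) (μ : F) :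
    ∑ x : F, ψ (x * (1 - x) * (1 - μ * x)) = ∑ x : F, ψ (x * (x - 1) * (x - μ)) := by
  rw [← Equiv.sum_comp (Equiv.inv F)]
  refine sum_congr rfl fun x _ => ?_
  rcases eq_or_ne x 0 with rfl | hx
  · simp
  have hx' : x⁻¹ * x⁻¹ ≠ 0 := by positivity
  have hsquare : x⁻¹ * (1 - x⁻¹) * (1 - μ * x⁻¹) =
      (x⁻¹ * x⁻¹) * (x⁻¹ * x⁻¹) * (x * (x - 1) * (x - μ)) := by
    field_simp
  rw [Equiv.inv_apply, hsquare, hψ.apply_mul_self_mul hx']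

lemma sum_cubic_one_sub (ψ : MulChar F R) (μ : F) :
    ∑ x : F, ψ (x * (x - 1) * (x - μ)) =
      ψ (-1) * ∑ x : F, ψ (x * (x - 1) * (x - (1 - μ))) := by
  rw [← Equiv.sum_comp (Equiv.subLeft (1 : F)), mul_sum]
  refine sum_congr rfl fun x _ => ?_
  rw [Equiv.subLeft_apply, ← apply_neg]
  congr 1
  ring

lemma IsQuadratic.sum_legendre_one_sub (hψ : ψ.IsQuadratic) (μ : F) :
    ∑ x : F, ψ (x * (1 - x) * (1 - μ * x)) =
      ψ (-1) * ∑ x : F, ψ (x * (1 - x) * (1 - (1 - μ) * x)) := by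
  rw [hψ.sum_legendre_eq, sum_cubic_one_sub, hψ.sum_legendre_eq]

-- For `x ∉ {0, 1}` the condition has the single solution `y = (1 - x) / (1 - (1 - lam) * x)`.
lemma IsQuadratic.sum_ite_eq_apply_cubic [DecidableEq F] (hψ : ψ.IsQuadratic)
    {lam : F} (hlam : lam ≠ 0) (x : F) :
    ∑ y : F, (if x * (1 - x)⁻¹ * lam * (y * (1 - y)⁻¹) = 1 then ψ x * ψ y else 0) =
      ψ (x * (1 - x) * (1 - (1 - lam) * x)) := by
  rcases eq_or_ne x 0 with rfl | hx0
  · simp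
  rcases eq_or_ne x 1 with rfl | hx1
  · simp
  have hc : x * (1 - x)⁻¹ * lam ≠ 0 := by positivity
  have hc1 : x * (1 - x)⁻¹ * lam + 1 = (1 - (1 - lam) * x) * (1 - x)⁻¹ := by
    field_simp
    ring
  simp only [mul_mul_inv_one_sub_eq_one_iff, ne_eq, hc, not_false_eq_true, true_and,
    ← mul_ite_zero, ← mul_sum, sum_ite_mul_eq_one, hc1, hψ.apply_inv, map_mul]
  ring

end MulChar

section Greene

lemma phiChar_isQuadratic (p : ℕ) [Fact p.Prime] : (phiChar p).IsQuadratic :=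
  (quadraticChar_isQuadratic _).comp _

variable {p : ℕ} [Fact p.Prime]

lemma sum_mulChar_apply (t : ZMod p) :
    ∑ χ : MulChar (ZMod p) ℂ, χ t = if t = 1 then (p : ℂ) - 1 else 0 := by
  have : NeZero p := ⟨(Fact.out : p.Prime).ne_zero⟩
  rw [DirichletCharacter.sum_characters_eq, Nat.totient_prime Fact.out,
    Nat.cast_sub (Fact.out : p.Prime).one_le, Nat.cast_one]

lemma gbinom_mul_gbinom_mul_apply (A B χ : MulChar (ZMod p) ℂ) (lam : ZMod p) :
    gbinom (A * χ) χ * gbinom (B * χ) χ * χ lam =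
      ((p : ℂ) ^ 2)⁻¹ * ∑ x : ZMod p, ∑ y : ZMod p,
        A x * B y * χ (x * (1 - x)⁻¹ * lam * (y * (1 - y)⁻¹)) := by
  have hsign : χ (-1) * χ (-1) = 1 := by rw [← map_mul, neg_one_mul, neg_neg, map_one]
  rw [gbinom, gbinom, MulChar.jacobiSum_mul_inv_right, MulChar.jacobiSum_mul_inv_right]
  calc _ = χ (-1) * χ (-1) * ((p : ℂ) ^ 2)⁻¹ * ((∑ x : ZMod p, A x * χ (x * (1 - x)⁻¹)) *
        (∑ y : ZMod p, B y * χ (y * (1 - y)⁻¹)) * χ lam) := by ring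
    _ = _ := by
      rw [hsign, one_mul, sum_mul_sum, sum_mul]
      refine congrArg _ (sum_congr rfl fun x _ => ?_)
      rw [sum_mul]
      refine sum_congr rfl fun y _ => ?_
      simp only [map_mul]
      ring

lemma twoF1_one_eq_sum (A B : MulChar (ZMod p) ℂ) (lam : ZMod p) :
    twoF1 A B 1 lam = (p : ℂ)⁻¹ * ∑ x : ZMod p, ∑ y : ZMod p,
      if x * (1 - x)⁻¹ * lam * (y * (1 - y)⁻¹) = 1 then A x * B y else 0 := by
  have hp : (p : ℂ) ≠ 0 := Nat.cast_ne_zero.mpr (Fact.out : p.Prime).ne_zero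
  have hp1 : (p : ℂ) - 1 ≠ 0 := sub_ne_zero.mpr (by exact_mod_cast (Fact.out : p.Prime).ne_one)
  simp only [twoF1, one_mul, gbinom_mul_gbinom_mul_apply, ← mul_sum]
  rw [sum_comm]
  simp only [sum_comm (γ := MulChar (ZMod p) ℂ), ← mul_sum, sum_mulChar_apply, mul_ite, mul_zero,
    ← ite_zero_mul, ← sum_mul]
  generalize (∑ x : ZMod p, ∑ y : ZMod p, _ : ℂ) = S
  field_simp

lemma twoF1_phiChar_phiChar_one {lam : ZMod p} (hlam : lam ≠ 0) :
    twoF1 (phiChar p) (phiChar p) 1 lam =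
      (p : ℂ)⁻¹ * ∑ x : ZMod p, phiChar p (x * (1 - x) * (1 - (1 - lam) * x)) := by
  simp only [twoF1_one_eq_sum, (phiChar_isQuadratic p).sum_ite_eq_apply_cubic hlam]

end Greene

theorem stmt_13_general (p : ℕ) [Fact p.Prime] (lam : ZMod p) (h0 : lam ≠ 0)
    (h1 : lam ≠ 1) :
    twoF1 (phiChar p) (phiChar p) 1 lam =
      phiChar p (-1) * twoF1 (phiChar p) (phiChar p) 1 (1 - lam) := by
  rw [twoF1_phiChar_phiChar_one h0, twoF1_phiChar_phiChar_one (sub_ne_zero.mpr h1.symm),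
    (phiChar_isQuadratic p).sum_legendre_one_sub, sub_sub_cancel]
  ring

theorem stmt_13 (p : ℕ) [Fact p.Prime] (hp : p ≠ 2) (lam : ZMod p) (h0 : lam ≠ 0)
    (h1 : lam ≠ 1) :
    twoF1 (phiChar p) (phiChar p) 1 lam =
      phiChar p (-1) * twoF1 (phiChar p) (phiChar p) 1 (1 - lam) :=
  stmt_13_general p lam h0 h1
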